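/- Let W be a Laurent polynomial in n variables x₁,...,x_n, and let f be a Laurent polynomial in x₁,...,x_{n-1}. If W' is obtained from W by the substitution x_n ↦ x_n · f(x₁,...,x_{n-1}) and W' is again a Laurent polynomial, then W and W' have the same periods: φ_d(W) = φ_d(W') for all d ≥ 0. -/

import Mathlib

open AddMonoidAlgebra

namespace PeriodsMutationAux

noncomputable section

instance isDomainA (n : ℕ) : IsDomain (AddMonoidAlgebra ℂ (Fin (n+1) → ℤ)) :=
  NoZeroDivisors.to_isDomain _

variable (n : ℕ)

abbrev A := AddMonoidAlgebra ℂ (Fin (n+1) → ℤ)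
abbrev F := FractionRing (A n)

variable {n}

/-- grading monoid hom -/
def θmon : Multiplicative (Fin (n+1) → ℤ) →* AddMonoidAlgebra (A n) ℤ where
  toFun v := AddMonoidAlgebra.single (Multiplicative.toAdd v (Fin.last n))
      (AddMonoidAlgebra.single (Multiplicative.toAdd v) 1)
  map_one' := by
    rw [AddMonoidAlgebra.one_def]; rfl
  map_mul' v w := by
    simp only [AddMonoidAlgebra.single_mul_single, one_mul]; rfl

def Θ : A n →ₐ[ℂ] AddMonoidAlgebra (A n) ℤ :=
  AddMonoidAlgebra.lift ℂ _ (Fin (n+1) → ℤ) θmon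

lemma Θ_single (v : Fin (n+1) → ℤ) (c : ℂ) :
    Θ (AddMonoidAlgebra.single v c) =
      AddMonoidAlgebra.single (v (Fin.last n)) (AddMonoidAlgebra.single v c) := by
  rw [Θ, AddMonoidAlgebra.lift_single]
  show c • AddMonoidAlgebra.single _ _ = _
  rw [AddMonoidAlgebra.smul_single, AddMonoidAlgebra.smul_single']
  simp

lemma Θ_zero_zero (X : A n) : ((Θ X).coeff 0).coeff 0 = X.coeff 0 := by
  induction X using AddMonoidAlgebra.induction_linear with
  | zero => simp
  | add P Q hP hQ => rw [map_add]; rw [AddMonoidAlgebra.coe_add, AddMonoidAlgebra.coe_add, Pi.add_apply, AddMonoidAlgebra.coe_add, Pi.add_apply, Pi.add_apply, hP, hQ]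
  | single v c =>
    rw [Θ_single, AddMonoidAlgebra.coeff_single, Finsupp.single_apply]
    by_cases hv : v = 0
    · simp [hv]
    · have h1 : (AddMonoidAlgebra.single v c : A n).coeff 0 = 0 := by
        rw [AddMonoidAlgebra.coeff_single, Finsupp.single_apply, if_neg hv]
      rw [h1]
      by_cases hp : v (Fin.last n) = 0
      · rw [if_pos hp, h1]
      · rw [if_neg hp]; simp

lemma Θ_deg_zero (X : A n) (hX : ∀ v ∈ X.coeff.support, v (Fin.last n) = 0) :
    Θ X = AddMonoidAlgebra.single (0:ℤ) X := by
  conv_lhs => rw [← AddMonoidAlgebra.sum_coeff_single X]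
  rw [map_finsuppSum]
  have : (Finsupp.sum X.coeff fun v c => Θ (AddMonoidAlgebra.single v c)) =
      Finsupp.sum X.coeff fun v c =>
        (AddMonoidAlgebra.singleAddHom (0:ℤ) : A n →+ AddMonoidAlgebra (A n) ℤ)
          (AddMonoidAlgebra.single v c) := by
    apply Finsupp.sum_congr
    intro v hv
    rw [Θ_single, hX v hv]
    rfl
  rw [this, ← map_finsuppSum, AddMonoidAlgebra.sum_coeff_single]
  rfl

variable (f : A n)

lemma iotaf_ne (hf0 : f ≠ 0) : (algebraMap (A n) (F n)) f ≠ 0 := by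
  intro h
  exact hf0 ((map_eq_zero_iff _ (IsFractionRing.injective (A n) (F n))).mp h)

/-- substitution monoid hom -/
def φmon (hf0 : f ≠ 0) : Multiplicative (Fin (n+1) → ℤ) →* F n where
  toFun v := algebraMap (A n) (F n) (AddMonoidAlgebra.single (Multiplicative.toAdd v) 1) *
      algebraMap (A n) (F n) f ^ (Multiplicative.toAdd v (Fin.last n))
  map_one' := by
    show algebraMap (A n) (F n) (AddMonoidAlgebra.single 0 1) * _ ^ ((0 : Fin (n+1) → ℤ) (Fin.last n)) = 1
    rw [← AddMonoidAlgebra.one_def, map_one, one_mul, Pi.zero_apply, zpow_zero]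
  map_mul' v w := by
    show algebraMap (A n) (F n) (AddMonoidAlgebra.single (Multiplicative.toAdd v + Multiplicative.toAdd w) 1) *
        _ ^ ((Multiplicative.toAdd v + Multiplicative.toAdd w) (Fin.last n)) = _
    have h1 : (AddMonoidAlgebra.single (Multiplicative.toAdd v + Multiplicative.toAdd w) (1:ℂ) : A n)
        = AddMonoidAlgebra.single (Multiplicative.toAdd v) 1 * AddMonoidAlgebra.single (Multiplicative.toAdd w) 1 := by
      rw [AddMonoidAlgebra.single_mul_single, one_mul]
    rw [h1, map_mul, Pi.add_apply, zpow_add₀ (iotaf_ne f hf0)]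
    show _ = (_ * _) * (_ * _)
    ring

def Φ (hf0 : f ≠ 0) : A n →ₐ[ℂ] F n :=
  AddMonoidAlgebra.lift ℂ _ (Fin (n+1) → ℤ) (φmon f hf0)

lemma Φ_apply (hf0 : f ≠ 0) (X : A n) :
    Φ f hf0 X = ∑ v ∈ X.coeff.support,
      X.coeff v • (algebraMap (A n) (F n) (AddMonoidAlgebra.single v 1) *
        algebraMap (A n) (F n) f ^ (v (Fin.last n))) := by
  rw [Φ, AddMonoidAlgebra.lift_apply]
  rfl

lemma coeff_zero_eq (hf : ∀ v ∈ f.coeff.support, v (Fin.last n) = 0) (hf0 : f ≠ 0)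
    (P P' : A n) (hP : algebraMap (A n) (F n) P' = Φ f hf0 P) : P'.coeff 0 = P.coeff 0 := by
  classical
  set ι := algebraMap (A n) (F n) with hι
  set N : ℕ := P.coeff.support.sup (fun v => (-(v (Fin.last n))).toNat) with hN
  have hNv : ∀ v ∈ P.coeff.support, (0:ℤ) ≤ (N:ℤ) + v (Fin.last n) := by
    intro v hv
    have h1 : (-(v (Fin.last n))).toNat ≤ N :=
      Finset.le_sup (f := fun v => (-(v (Fin.last n))).toNat) hv
    have h2 : -(v (Fin.last n)) ≤ ((-(v (Fin.last n))).toNat : ℤ) := Int.self_le_toNat _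
    have h3 : ((-(v (Fin.last n))).toNat : ℤ) ≤ (N:ℤ) := by exact_mod_cast h1
    linarith
  set m : (Fin (n+1) → ℤ) → ℕ := fun v => ((N:ℤ) + v (Fin.last n)).toNat with hm
  have hmv : ∀ v ∈ P.coeff.support, ((m v : ℤ)) = (N:ℤ) + v (Fin.last n) := fun v hv =>
    Int.toNat_of_nonneg (hNv v hv)
  have hsmul : ∀ (c : ℂ) (x : A n), ι (c • x) = c • ι x := by
    intro c x
    rw [hι, Algebra.smul_def, map_mul, ← IsScalarTower.algebraMap_apply, ← Algebra.smul_def]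
  set Q : A n := ∑ v ∈ P.coeff.support, P.coeff v • (AddMonoidAlgebra.single v 1 * f ^ m v) with hQ
  have hstep : f ^ N * P' = Q := by
    apply IsFractionRing.injective (A n) (F n)
    show ι _ = ι _
    rw [map_mul, map_pow, hP, Φ_apply, hQ, map_sum, Finset.mul_sum]
    apply Finset.sum_congr rfl
    intro v hv
    rw [hsmul, mul_smul_comm]
    congr 1
    rw [map_mul, map_pow]
    rw [← zpow_natCast (ι f) N, ← zpow_natCast (ι f) (m v), hmv v hv,
      zpow_add₀ (iotaf_ne f hf0)]
    ring
  have hTheta := congrArg (Θ (n := n)) hstep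
  rw [map_mul, map_pow, Θ_deg_zero f hf] at hTheta
  have hLHS : (AddMonoidAlgebra.single (0:ℤ) f) ^ N = AddMonoidAlgebra.single (0:ℤ) (f ^ N) := by
    rw [AddMonoidAlgebra.single_pow]
    simp
  rw [hLHS, hQ, map_sum] at hTheta
  have h0 := congrArg (fun X : AddMonoidAlgebra (A n) ℤ => X.coeff 0) hTheta
  beta_reduce at h0
  rw [AddMonoidAlgebra.coeff_single_zero_mul, AddMonoidAlgebra.coeff_sum, Finset.sum_apply'] at h0
  set S : A n := ∑ v ∈ P.coeff.support,
    if v (Fin.last n) = 0 then AddMonoidAlgebra.single v (P.coeff v) else 0 with hS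
  have hRHS : ∑ v ∈ P.coeff.support, (Θ (P.coeff v • (AddMonoidAlgebra.single v 1 * f ^ m v))).coeff (0:ℤ)
      = S * f ^ N := by
    rw [hS, Finset.sum_mul]
    apply Finset.sum_congr rfl
    intro v hv
    rw [map_smul, map_mul, Θ_single, map_pow, Θ_deg_zero f hf, AddMonoidAlgebra.single_pow,
      smul_zero, AddMonoidAlgebra.single_mul_single, add_zero, AddMonoidAlgebra.smul_single,
      AddMonoidAlgebra.coeff_single, Finsupp.single_apply]
    by_cases hπ : v (Fin.last n) = 0
    · have hmN : m v = N := by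
        rw [hm]
        simp [hπ]
      rw [if_pos hπ, if_pos hπ, hmN, ← smul_mul_assoc, AddMonoidAlgebra.smul_single', mul_one]
    · rw [if_neg hπ, if_neg hπ, zero_mul]
  rw [hRHS] at h0
  have hfN : f ^ N ≠ 0 := pow_ne_zero _ hf0
  have hcancel : (Θ P').coeff 0 = S := by
    apply mul_left_cancel₀ hfN
    rw [h0, mul_comm]
  have hP'0 : P'.coeff 0 = ((Θ P').coeff 0).coeff 0 := (Θ_zero_zero P').symm
  rw [hP'0, hcancel, hS, AddMonoidAlgebra.coeff_sum, Finset.sum_apply']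
  have : ∀ v ∈ P.coeff.support,
      (if v (Fin.last n) = 0 then AddMonoidAlgebra.single v (P.coeff v) else (0 : A n)).coeff 0
        = if v = 0 then P.coeff v else 0 := by
    intro v hv
    by_cases hv0 : v = 0
    · subst hv0
      simp
    · rw [if_neg hv0]
      by_cases hπ : v (Fin.last n) = 0
      · rw [if_pos hπ, AddMonoidAlgebra.coeff_single, Finsupp.single_apply, if_neg hv0]
      · rw [if_neg hπ, AddMonoidAlgebra.coeff_zero, Finsupp.coe_zero, Pi.zero_apply]
  rw [Finset.sum_congr rfl this, Finset.sum_ite_eq' P.coeff.support 0 (fun v => P.coeff v)]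
  by_cases h00 : (0 : Fin (n+1) → ℤ) ∈ P.coeff.support
  · rw [if_pos h00]
  · rw [if_neg h00, (Finsupp.notMem_support_iff.mp h00)]

end

end PeriodsMutationAux


/-- Mutation invariance of periods: if `W'` is obtained from the Laurent polynomial `W`
in variables `x₁,…,x_{n+1}` by the substitution `x_{n+1} ↦ x_{n+1} · f(x₁,…,x_n)`, where
`f ≠ 0` is a Laurent polynomial in the first `n` variables (expressed in the fraction
field: `W' = ∑_v W_v · x^v · f^{v_{n+1}}`), and `W'` is again a Laurent polynomial, then
all periods agree: the constant term of `W ^ d` equals that of `W' ^ d` for all `d`. -/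
theorem periods_mutation_invariant (n d : ℕ)
    (f W W' : AddMonoidAlgebra ℂ (Fin (n + 1) → ℤ))
    (hf : ∀ v ∈ f.coeff.support, v (Fin.last n) = 0) (hf0 : f ≠ 0)
    (ι : AddMonoidAlgebra ℂ (Fin (n + 1) → ℤ) →+*
      FractionRing (AddMonoidAlgebra ℂ (Fin (n + 1) → ℤ)))
    (hι : ι = algebraMap _ _)
    (h : ι W' =
      ∑ v ∈ W.coeff.support,
        W.coeff v • (ι (AddMonoidAlgebra.single v 1) * ι f ^ (v (Fin.last n)))) :
    (W ^ d).coeff (0 : Fin (n + 1) → ℤ) = (W' ^ d).coeff (0 : Fin (n + 1) → ℤ) := by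
  subst hι
  have hW : algebraMap (PeriodsMutationAux.A n) (PeriodsMutationAux.F n) W'
      = PeriodsMutationAux.Φ f hf0 W :=
    h.trans (PeriodsMutationAux.Φ_apply f hf0 W).symm
  have hpow : algebraMap (PeriodsMutationAux.A n) (PeriodsMutationAux.F n) (W' ^ d)
      = PeriodsMutationAux.Φ f hf0 (W ^ d) := by
    rw [map_pow, map_pow, hW]
  exact (PeriodsMutationAux.coeff_zero_eq f hf hf0 (W ^ d) (W' ^ d) hpow).symm
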